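/- Let ⟨r,f⟩ : S₂ ⇒ S₁ be a schema morphism and M₁ an S₁-structure. Then the formula function r̂ is an isometry between the extent orders: for all formulas φ,ψ over S₂ with σ̂₂(φ) = σ̂₂(ψ), φ ≤ ψ in the extent order of the formula classification of the inverse image structure struc_{⟨r,f⟩}(M₁) if and only if r̂(φ) ≤_{R̂₁} r̂(ψ) in the extent order of the formula classification of M₁. -/

import Mathlib

/-- A type list ⟨I,s⟩ over a set `X` of entity types. -/
structure TypeList (X : Type) where
  I : Type
  s : I → X

/-- A tuple ⟨J,t⟩ over a set `Y` of entity instances. -/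
structure Tup (Y : Type) where
  J : Type
  t : J → Y

/-- `Σ_f`: componentwise action of `f : X₂ → X₁` on type lists. -/
def TypeList.map {X₂ X₁ : Type} (f : X₂ → X₁) (L : TypeList X₂) : TypeList X₁ :=
  ⟨L.I, f ∘ L.s⟩

/-- `Σ_g`: componentwise action of `g : Y₁ → Y₂` on tuples. -/
def Tup.map {Y₁ Y₂ : Type} (g : Y₁ → Y₂) (a : Tup Y₁) : Tup Y₂ :=
  ⟨a.J, g ∘ a.t⟩

/-- Satisfaction in the list classification `List(E)`:
`⟨J,t⟩ ⊨_{List(E)} ⟨I,s⟩` iff `J = I` and `t(i) ⊨_E s(i)` for all `i`. -/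
def listSat {X Y : Type} (E : Y → X → Prop) (a : Tup Y) (L : TypeList X) : Prop :=
  ∃ e : a.J = L.I, ∀ i : L.I, E (a.t (cast e.symm i)) (L.s i)

/-- `tup_E(I,s)`: the set of functions `t : I → Y` with `t(i) ⊨_E s(i)` for all `i`. -/
def tupSet {X Y : Type} (E : Y → X → Prop) (L : TypeList X) : Set (L.I → Y) :=
  {t | ∀ i, E (t i) (L.s i)}

/-- Inverse image classification along `f` on types. -/
def invImage' {X₂ X₁ Y : Type} (f : X₂ → X₁) (E : Y → X₁ → Prop) : Y → X₂ → Prop :=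
  fun y x => E y (f x)

/-- Formulas over a schema `S = ⟨R,σ,X⟩`, indexed by their signature (type list). -/
inductive Fmla {R X : Type} (σ : R → TypeList X) : TypeList X → Type 1
  | rel (ρ : R) : Fmla σ (σ ρ)
  | meet {L : TypeList X} : Fmla σ L → Fmla σ L → Fmla σ L
  | join {L : TypeList X} : Fmla σ L → Fmla σ L → Fmla σ L
  | imp {L : TypeList X} : Fmla σ L → Fmla σ L → Fmla σ L
  | diff {L : TypeList X} : Fmla σ L → Fmla σ L → Fmla σ L
  | neg {L : TypeList X} : Fmla σ L → Fmla σ L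
  | exist (L' L : TypeList X) (h : L'.I → L.I) (hc : ∀ i', L'.s i' = L.s (h i')) :
      Fmla σ L → Fmla σ L'
  | all (L' L : TypeList X) (h : L'.I → L.I) (hc : ∀ i', L'.s i' = L.s (h i')) :
      Fmla σ L → Fmla σ L'
  | subst (L' L : TypeList X) (h : L'.I → L.I) (hc : ∀ i', L'.s i' = L.s (h i')) :
      Fmla σ L' → Fmla σ L

/-- A structure `M = ⟨⟨R,K,⊨_R⟩,⟨σ,τ⟩,⟨X,Y,⊨_E⟩⟩` over the schema `⟨R,σ,X⟩`. -/
structure Struc (R X : Type) (σ : R → TypeList X) where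
  K : Type
  Y : Type
  relSat : K → R → Prop
  entSat : Y → X → Prop
  τ : K → Tup Y
  cond : ∀ k ρ, relSat k ρ → listSat entSat (τ k) (σ ρ)

/-- The formula classification `⊨_{R̂}` of a structure, defined by recursion on formulas. -/
def Struc.sat {R X : Type} {σ : R → TypeList X} (M : Struc R X σ) :
    {L : TypeList X} → Fmla σ L → M.K → Prop
  | _, .rel ρ, k => M.relSat k ρ
  | _, .meet φ ψ, k => M.sat φ k ∧ M.sat ψ k
  | _, .join φ ψ, k => M.sat φ k ∨ M.sat ψ k
  | _, .imp φ ψ, k => M.sat φ k → M.sat ψ k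
  | _, .diff φ ψ, k => M.sat φ k ∧ ¬ M.sat ψ k
  | _, .neg φ, k => ¬ M.sat φ k
  | _, .exist L' L h _ φ, k =>
      listSat M.entSat (M.τ k) L' ∧
      ∃ t : L.I → M.Y, (∃ k', M.sat φ k' ∧ M.τ k' = ⟨L.I, t⟩) ∧ M.τ k = ⟨L'.I, t ∘ h⟩
  | _, .all L' L h _ φ, k =>
      listSat M.entSat (M.τ k) L' ∧
      ∀ t : L.I → M.Y, (∀ i, M.entSat (t i) (L.s i)) → M.τ k = ⟨L'.I, t ∘ h⟩ →
        ∃ k', M.sat φ k' ∧ M.τ k' = ⟨L.I, t⟩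
  | _, .subst L' L h _ φ', k =>
      ∃ e : (M.τ k).J = L.I,
        (∀ i, M.entSat ((M.τ k).t (cast e.symm i)) (L.s i)) ∧
        ∃ k', M.sat φ' k' ∧
          M.τ k' = ⟨L'.I, fun i' => (M.τ k).t (cast e.symm (h i'))⟩

/-- The extent order on the formula classification: `φ ≤_{R̂} ψ`. -/
def Struc.extLe {R X : Type} {σ : R → TypeList X} (M : Struc R X σ)
    {L : TypeList X} (φ ψ : Fmla σ L) : Prop :=
  ∀ k, M.sat φ k → M.sat ψ k

/-- The formula function `r̂` of a schema morphism `⟨r,f⟩ : S₂ ⇒ S₁`. -/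
def fmlaMap {R₂ X₂ R₁ X₁ : Type} {σ₂ : R₂ → TypeList X₂} {σ₁ : R₁ → TypeList X₁}
    (r : R₂ → R₁) (f : X₂ → X₁) (hσ : ∀ ρ, σ₁ (r ρ) = (σ₂ ρ).map f) :
    {L : TypeList X₂} → Fmla σ₂ L → Fmla σ₁ (L.map f)
  | _, .rel ρ => cast (congrArg (Fmla σ₁) (hσ ρ)) (Fmla.rel (r ρ))
  | _, .meet φ ψ => .meet (fmlaMap r f hσ φ) (fmlaMap r f hσ ψ)
  | _, .join φ ψ => .join (fmlaMap r f hσ φ) (fmlaMap r f hσ ψ)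
  | _, .imp φ ψ => .imp (fmlaMap r f hσ φ) (fmlaMap r f hσ ψ)
  | _, .diff φ ψ => .diff (fmlaMap r f hσ φ) (fmlaMap r f hσ ψ)
  | _, .neg φ => .neg (fmlaMap r f hσ φ)
  | _, .exist L' L h hc φ =>
      .exist (L'.map f) (L.map f) h (fun i' => congrArg f (hc i')) (fmlaMap r f hσ φ)
  | _, .all L' L h hc φ =>
      .all (L'.map f) (L.map f) h (fun i' => congrArg f (hc i')) (fmlaMap r f hσ φ)
  | _, .subst L' L h hc φ' =>
      .subst (L'.map f) (L.map f) h (fun i' => congrArg f (hc i')) (fmlaMap r f hσ φ')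

/-- The set `R̂` of (signature-indexed) formulas over a schema. -/
def FmlaSym {R X : Type} (σ : R → TypeList X) : Type 1 :=
  Σ L : TypeList X, Fmla σ L

/-- The signature map `σ̂` of the formula schema. -/
def fmlaSig {R X : Type} {σ : R → TypeList X} (φ : FmlaSym σ) : TypeList X :=
  φ.1

/-- The formula function `r̂ : R̂₂ → R̂₁` on signature-indexed formulas. -/
def fmlaFun {R₂ X₂ R₁ X₁ : Type} {σ₂ : R₂ → TypeList X₂} {σ₁ : R₁ → TypeList X₁}
    (r : R₂ → R₁) (f : X₂ → X₁) (hσ : ∀ ρ, σ₁ (r ρ) = (σ₂ ρ).map f) :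
    FmlaSym σ₂ → FmlaSym σ₁ :=
  fun φ => ⟨φ.1.map f, fmlaMap r f hσ φ.2⟩

/-- The inverse image structure `struc_{⟨r,f⟩}(M₁)` along a schema morphism `⟨r,f⟩ : S₂ ⇒ S₁`. -/
def strucInv {R₂ X₂ R₁ X₁ : Type} {σ₂ : R₂ → TypeList X₂} {σ₁ : R₁ → TypeList X₁}
    (r : R₂ → R₁) (f : X₂ → X₁) (hσ : ∀ ρ, σ₁ (r ρ) = (σ₂ ρ).map f)
    (M₁ : Struc R₁ X₁ σ₁) : Struc R₂ X₂ σ₂ where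
  K := M₁.K
  Y := M₁.Y
  relSat := fun k ρ₂ => M₁.relSat k (r ρ₂)
  entSat := invImage' f M₁.entSat
  τ := M₁.τ
  cond := fun k ρ₂ hk => by
    have h := M₁.cond k (r ρ₂)
    rw [hσ ρ₂] at h
    exact h hk

/-! The inverse image structure has the keys and tuple function of `M₁`, and its entity
classification is `f⁻¹(E₁)`, so `tup_{f⁻¹E₁}(L) = tup_{E₁}(Σ_f L)` holds definitionally. Hence every
clause of the satisfaction relation for a formula `φ` over `S₂` unfolds to the corresponding clause
for `r̂(φ)` over `S₁`, and induction on `φ` shows that a key satisfies `φ` in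
`struc_{⟨r,f⟩}(M₁)` iff it satisfies `r̂(φ)` in `M₁`. The two extent orders therefore coincide. -/

theorem Struc.sat_cast {R X : Type} {σ : R → TypeList X} (M : Struc R X σ)
    {L L' : TypeList X} (e : L = L') (φ : Fmla σ L) (k : M.K) :
    M.sat (cast (congrArg (Fmla σ) e) φ) k ↔ M.sat φ k := by
  subst e
  rfl

theorem strucInv_sat_iff {R₂ X₂ R₁ X₁ : Type} {σ₂ : R₂ → TypeList X₂} {σ₁ : R₁ → TypeList X₁}
    (r : R₂ → R₁) (f : X₂ → X₁) (hσ : ∀ ρ, σ₁ (r ρ) = (σ₂ ρ).map f)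
    (M₁ : Struc R₁ X₁ σ₁) {L : TypeList X₂} (φ : Fmla σ₂ L) (k : M₁.K) :
    (strucInv r f hσ M₁).sat φ k ↔ M₁.sat (fmlaMap r f hσ φ) k := by
  induction φ generalizing k with
  | rel ρ => exact (M₁.sat_cast (hσ ρ) (Fmla.rel (r ρ)) k).symm
  | meet φ ψ ihφ ihψ => exact and_congr (ihφ k) (ihψ k)
  | join φ ψ ihφ ihψ => exact or_congr (ihφ k) (ihψ k)
  | imp φ ψ ihφ ihψ => exact imp_congr (ihφ k) (ihψ k)
  | diff φ ψ ihφ ihψ => exact and_congr (ihφ k) (not_congr (ihψ k))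
  | neg φ ih => exact not_congr (ih k)
  | exist _ _ _ _ φ ih =>
    exact and_congr_right' <| exists_congr fun t =>
      and_congr_left' <| exists_congr fun k' => and_congr_left' (ih k')
  | all _ _ _ _ φ ih =>
    exact and_congr_right' <| forall_congr' fun t => imp_congr_right fun _ =>
      imp_congr_right fun _ => exists_congr fun k' => and_congr_left' (ih k')
  | subst _ _ _ _ φ' ih =>
    exact exists_congr fun e => and_congr_right' <|
      exists_congr fun k' => and_congr_left' (ih k')

/-- For a schema morphism `⟨r,f⟩ : S₂ ⇒ S₁` and an `S₁`-structure
`M₁`, the formula function `r̂` is an isometry between the extent orders: for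
formulas `φ,ψ` over `S₂` of the same signature, `φ ≤ ψ` in the formula
classification of `struc_{⟨r,f⟩}(M₁)` iff `r̂(φ) ≤_{R̂₁} r̂(ψ)`. -/
theorem fmlaMap_isometry
    {R₂ X₂ R₁ X₁ : Type} {σ₂ : R₂ → TypeList X₂} {σ₁ : R₁ → TypeList X₁}
    (r : R₂ → R₁) (f : X₂ → X₁) (hσ : ∀ ρ, σ₁ (r ρ) = (σ₂ ρ).map f)
    (M₁ : Struc R₁ X₁ σ₁)
    {L : TypeList X₂} (φ ψ : Fmla σ₂ L) :
    (strucInv r f hσ M₁).extLe φ ψ ↔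
      M₁.extLe (fmlaMap r f hσ φ) (fmlaMap r f hσ ψ) := by
  exact forall_congr' fun k =>
    imp_congr (strucInv_sat_iff r f hσ M₁ φ k) (strucInv_sat_iff r f hσ M₁ ψ k)
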